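/- arXiv:1906.00243 — 5 statements merged into one kernel-verified Lean document; each statement's English description precedes it below -/
import Mathlib

section
/- Let E ⊆ [0,1] be a closed nowhere dense set of positive Lebesgue measure (e.g., a fat Cantor set). Then the characteristic function χ_E is not equal almost everywhere to any function that is differentiable almost everywhere on [0,1]. In particular, for every point t of E that is a density point of E, the finite derivative of χ_E at t does not exist. -/
open MeasureTheory Set Filter

/-- `t` is a Lebesgue density point of `E`: `m(E ∩ [t-h, t+h]) / (2h) → 1` as `h → 0⁺`. -/
noncomputable def densityOne (E : Set ℝ) (t : ℝ) : Prop :=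
  Tendsto (fun h : ℝ => volume (E ∩ Icc (t - h) (t + h)) / ENNReal.ofReal (2 * h))
    (nhdsWithin 0 (Ioi 0)) (nhds 1)

/-- A function continuous at `t` with value `1` cannot take the value `0`
arbitrarily close to `t`. -/
lemma no_cont_aux (f : ℝ → ℝ) (t : ℝ) (hf : ContinuousAt f t) (ht : f t = 1)
    (h : ∀ δ > (0:ℝ), ∃ x, |x - t| < δ ∧ f x = 0) : False := by
  rw [Metric.continuousAt_iff] at hf
  obtain ⟨δ, hδ, hδ'⟩ := hf (1/2) (by norm_num)
  obtain ⟨x, hx, hx0⟩ := h δ hδ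
  have := hδ' (show dist x t < δ by rwa [Real.dist_eq])
  rw [Real.dist_eq, hx0, ht] at this
  norm_num at this

/-- Near any point of `[0,1]`, there is a nonempty open interval inside `(0,1)`. -/
lemma interval_aux (t δ : ℝ) (ht : t ∈ Icc (0:ℝ) 1) (hδ : 0 < δ) :
    (Ioo (max (t - δ) 0) (min (t + δ) 1)).Nonempty ∧
    IsOpen (Ioo (max (t - δ) 0) (min (t + δ) 1)) ∧
    Ioo (max (t - δ) 0) (min (t + δ) 1) ⊆ Icc (0:ℝ) 1 ∧
    ∀ x ∈ Ioo (max (t - δ) 0) (min (t + δ) 1), |x - t| < δ := by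
  obtain ⟨h0, h1⟩ := ht
  refine ⟨?_, isOpen_Ioo, ?_, ?_⟩
  · rw [nonempty_Ioo, max_lt_iff, lt_min_iff, lt_min_iff]
    constructor <;> constructor <;> linarith
  · intro x hx
    simp only [mem_Ioo, max_lt_iff, lt_min_iff] at hx
    exact ⟨le_of_lt hx.1.2, le_of_lt hx.2.2⟩
  · intro x hx
    simp only [mem_Ioo, max_lt_iff, lt_min_iff] at hx
    rw [abs_sub_lt_iff]
    constructor <;> linarith

/-- If `E ⊆ [0,1]` is closed, nowhere dense, and of positive Lebesgue measure
(e.g. a fat Cantor set), then the characteristic function `χ_E` is not a.e. equal to any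
function which is a.e. differentiable on `[0,1]`; in particular, at every point of `E`
which is a density point of `E`, `χ_E` has no finite derivative. -/
theorem stmt_3 (E : Set ℝ) (hE : E ⊆ Icc (0:ℝ) 1) (hclosed : IsClosed E)
    (hnwd : interior E = ∅) (hpos : 0 < volume E) :
    (¬ ∃ g : ℝ → ℝ,
        (∀ᵐ t ∂(volume.restrict (Icc (0:ℝ) 1)), DifferentiableAt ℝ g t) ∧
        (E.indicator fun _ => (1:ℝ)) =ᵐ[volume.restrict (Icc (0:ℝ) 1)] g)
    ∧ (∀ t ∈ E, densityOne E t →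
        ¬ DifferentiableAt ℝ (E.indicator fun _ => (1:ℝ)) t) := by
  constructor
  · rintro ⟨g, hdiff, hae⟩
    -- the two exceptional sets
    set N : Set ℝ := {x | E.indicator (fun _ => (1:ℝ)) x ≠ g x} with hN
    set D : Set ℝ := {x | ¬ DifferentiableAt ℝ g x} with hD
    have hNnull : volume (N ∩ Icc (0:ℝ) 1) = 0 := by
      have : volume.restrict (Icc (0:ℝ) 1) N = 0 := hae
      rwa [Measure.restrict_apply' measurableSet_Icc] at this
    have hDnull : volume (D ∩ Icc (0:ℝ) 1) = 0 := by
      have : volume.restrict (Icc (0:ℝ) 1) D = 0 := ae_iff.mp hdiff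
      rwa [Measure.restrict_apply' measurableSet_Icc] at this
    -- pick a good point of E
    have hpos' : 0 < volume (E \ ((N ∩ Icc 0 1) ∪ (D ∩ Icc 0 1))) := by
      rw [measure_diff_null (by rw [measure_union_null hNnull hDnull])]
      exact hpos
    obtain ⟨t, htE, htND⟩ := nonempty_of_measure_ne_zero hpos'.ne'
    have htIcc : t ∈ Icc (0:ℝ) 1 := hE htE
    have htN : t ∉ N := fun h => htND (Or.inl ⟨h, htIcc⟩)
    have htD : t ∉ D := fun h => htND (Or.inr ⟨h, htIcc⟩)
    have hgt : g t = 1 := by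
      have := not_not.mp htN
      rw [← this, indicator_of_mem htE]
    have hct : ContinuousAt g t := (not_not.mp htD).continuousAt
    refine no_cont_aux g t hct hgt ?_
    intro δ hδ
    obtain ⟨hne, hop, hsub, habs⟩ := interval_aux t δ htIcc hδ
    set V : Set ℝ := Ioo (max (t - δ) 0) (min (t + δ) 1) with hV
    -- V \ E is open and nonempty
    have hVE : (V \ E).Nonempty := by
      by_contra h
      rw [not_nonempty_iff_eq_empty, diff_eq_empty] at h
      have : V ⊆ interior E := hop.subset_interior_iff.mpr h
      rw [hnwd, subset_empty_iff] at this
      exact hne.ne_empty this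
    have hVEpos : 0 < volume (V \ E) :=
      (hop.sdiff hclosed).measure_pos volume hVE
    -- almost every point of V \ E has g = 0
    have key : ∃ x ∈ V \ E, g x = 0 := by
      by_contra h
      push_neg at h
      have hsubN : V \ E ⊆ N ∩ Icc (0:ℝ) 1 := by
        rintro x ⟨hxV, hxE⟩
        refine ⟨?_, hsub hxV⟩
        simp only [hN, mem_setOf_eq, indicator_of_notMem hxE]
        exact fun h0 => h x ⟨hxV, hxE⟩ h0.symm
      exact absurd (measure_mono_null hsubN hNnull) hVEpos.ne'
    obtain ⟨x, hxVE, hgx⟩ := key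
    exact ⟨x, habs x hxVE.1, hgx⟩
  · intro t htE _ hdiff
    have hct : ContinuousAt (E.indicator fun _ => (1:ℝ)) t := hdiff.continuousAt
    refine no_cont_aux _ t hct (indicator_of_mem htE _) ?_
    intro δ hδ
    obtain ⟨hne, hop, hsub, habs⟩ := interval_aux t δ (hE htE) hδ
    set V : Set ℝ := Ioo (max (t - δ) 0) (min (t + δ) 1) with hV
    have hVE : (V \ E).Nonempty := by
      by_contra h
      rw [not_nonempty_iff_eq_empty, diff_eq_empty] at h
      have : V ⊆ interior E := hop.subset_interior_iff.mpr h
      rw [hnwd, subset_empty_iff] at this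
      exact hne.ne_empty this
    obtain ⟨x, hxV, hxE⟩ := hVE
    exact ⟨x, habs x hxV, indicator_of_notMem hxE _⟩
end

section
/- The algebra AD[0,1] of almost everywhere approximately differentiable functions is (von Neumann) regular: for every f ∈ AD[0,1] there exists g ∈ AD[0,1] with f·g·f = f. Explicitly, one may take g(t) = 1/f(t) where f(t) ≠ 0 and g(t) = 0 otherwise, and this g is approximately differentiable almost everywhere. -/
open MeasureTheory Set Filter

/-- `f` has approximate derivative `L` at `t`. -/
noncomputable def HasApproxDerivAt (f : ℝ → ℝ) (L t : ℝ) : Prop :=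
  ∀ ε > (0:ℝ), densityOne {s : ℝ | s ≠ t ∧ |(f s - f t) / (s - t) - L| < ε} t

/-- `f` is approximately differentiable at almost every point of `[0,1]`. -/
noncomputable def ApproxDiffAE (f : ℝ → ℝ) : Prop :=
  ∀ᵐ t ∂(volume.restrict (Icc (0:ℝ) 1)), ∃ L, HasApproxDerivAt f L t

open Topology

/-! Since `0⁻¹ = 0` in Lean, the candidate inverse is just `t ↦ (f t)⁻¹`. Where `f t ≠ 0` it is
approximately differentiable by the chain rule for `x ↦ x⁻¹`. At almost every zero `t` of `f`, the
zero set of `f` has density one by Lebesgue's density theorem; the inverse vanishes on that set,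
so its approximate derivative at `t` is `0`. -/

lemma densityOne_iff_tendsto_closedBall {E : Set ℝ} {t : ℝ} :
    densityOne E t ↔ Tendsto (fun r => volume (E ∩ Metric.closedBall t r) /
      volume (Metric.closedBall t r)) (𝓝[>] 0) (𝓝 1) := by
  have h : ∀ r : ℝ, volume (E ∩ Metric.closedBall t r) / volume (Metric.closedBall t r)
      = volume (E ∩ Icc (t - r) (t + r)) / ENNReal.ofReal (2 * r) := by
    intro r
    rw [Real.closedBall_eq_Icc, Real.volume_Icc]
    congr 2
    ring
  simp only [h, densityOne]

lemma ae_densityOne {E : Set ℝ} (hE : MeasurableSet E) : ∀ᵐ t, t ∈ E → densityOne E t := by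
  filter_upwards [Besicovitch.ae_tendsto_measure_inter_div_of_measurableSet volume hE]
    with t ht htE
  rw [indicator_of_mem htE, Pi.one_apply] at ht
  exact densityOne_iff_tendsto_closedBall.mpr ht

lemma densityOne.mono {E F : Set ℝ} {t : ℝ} (hE : densityOne E t) (hEF : E ⊆ F) :
    densityOne F t := by
  refine tendsto_of_tendsto_of_tendsto_of_le_of_le' hE tendsto_const_nhds ?_ ?_
  · filter_upwards with h
    exact ENNReal.div_le_div_right (measure_mono (inter_subset_inter_left _ hEF)) _
  · filter_upwards with h
    calc volume (F ∩ Icc (t - h) (t + h)) / ENNReal.ofReal (2 * h)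
        ≤ ENNReal.ofReal (2 * h) / ENNReal.ofReal (2 * h) := by
          refine ENNReal.div_le_div_right ((measure_mono inter_subset_right).trans ?_) _
          rw [Real.volume_Icc, show t + h - (t - h) = 2 * h by ring]
      _ ≤ 1 := ENNReal.div_self_le_one

lemma densityOne.diff_singleton {E : Set ℝ} {t : ℝ} (hE : densityOne E t) :
    densityOne (E \ {t}) t := by
  have h : ∀ r : ℝ,
      volume ((E \ {t}) ∩ Icc (t - r) (t + r)) = volume (E ∩ Icc (t - r) (t + r)) := by
    intro r
    rw [← inter_sdiff_right_comm]
    exact measure_sdiff_null (measure_singleton t)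
  simpa only [densityOne, h] using hE

lemma densityOne.inter_of_mem_nhds {E U : Set ℝ} {t : ℝ} (hE : densityOne E t)
    (hU : U ∈ 𝓝 t) : densityOne (E ∩ U) t := by
  obtain ⟨δ, hδ, hball⟩ := Metric.mem_nhds_iff.mp hU
  refine hE.congr' ?_
  filter_upwards [Ioo_mem_nhdsGT hδ] with h hh
  have hsub : Icc (t - h) (t + h) ⊆ U := by
    rw [← Real.closedBall_eq_Icc]
    exact (Metric.closedBall_subset_ball hh.2).trans hball
  rw [inter_assoc, inter_eq_self_of_subset_right hsub]

lemma hasApproxDerivAt_zero_of_densityOne {f : ℝ → ℝ} {t : ℝ}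
    (hf : densityOne {s | f s = f t} t) : HasApproxDerivAt f 0 t := by
  intro ε hε
  refine hf.diff_singleton.mono ?_
  rintro s ⟨hs, hst⟩
  refine ⟨hst, ?_⟩
  simpa [show f s = f t from hs] using hε

lemma abs_div_sub_mul_div_le {Δ u d c η : ℝ} (h : |Δ - u * c| ≤ η * |u|) :
    |Δ / d - c * (u / d)| ≤ η * |u / d| := by
  rw [show Δ / d - c * (u / d) = (Δ - u * c) / d by ring, abs_div, abs_div, ← mul_div_assoc]
  exact div_le_div_of_nonneg_right h (abs_nonneg d)

lemma HasDerivAt.comp_hasApproxDerivAt {f φ : ℝ → ℝ} {L φ' t : ℝ}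
    (hφ : HasDerivAt φ φ' (f t)) (hf : HasApproxDerivAt f L t) :
    HasApproxDerivAt (φ ∘ f) (φ' * L) t := by
  intro ε hε
  set M := |L| + 1
  have hM : 0 < M := by positivity
  obtain ⟨ρ, hρ, hφρ⟩ := Metric.eventually_nhds_iff.mp
    ((hasDerivAt_iff_isLittleO.mp hφ).def (show 0 < ε / (2 * M) by positivity))
  set ε₁ := min 1 (ε / (2 * (|φ'| + 1)))
  have hε₁ : 0 < ε₁ := lt_min one_pos (by positivity)
  refine ((hf ε₁ hε₁).inter_of_mem_nhds (Metric.ball_mem_nhds t (div_pos hρ hM))).mono ?_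
  rintro s ⟨⟨hst, hq⟩, hs⟩
  refine ⟨hst, ?_⟩
  rw [Metric.mem_ball, Real.dist_eq, lt_div_iff₀ hM] at hs
  set q := (f s - f t) / (s - t)
  have hqM : |q| < M := by
    linarith [abs_sub_abs_le_abs_sub q L, min_le_left 1 (ε / (2 * (|φ'| + 1)))]
  have hfρ : dist (f s) (f t) < ρ := by
    rw [Real.dist_eq, ← div_mul_cancel₀ (f s - f t) (sub_ne_zero.mpr hst), abs_mul]
    nlinarith [abs_nonneg (s - t)]
  have hslope : |(φ (f s) - φ (f t)) / (s - t) - φ' * q| ≤ ε / (2 * M) * |q| :=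
    abs_div_sub_mul_div_le (by simpa only [Real.norm_eq_abs, smul_eq_mul] using hφρ hfρ)
  have hlin : |φ'| * |q - L| ≤ ε / 2 :=
    calc |φ'| * |q - L| ≤ |φ'| * (ε / (2 * (|φ'| + 1))) :=
          mul_le_mul_of_nonneg_left (hq.le.trans (min_le_right _ _)) (abs_nonneg _)
      _ ≤ ε / 2 := by
          rw [mul_div_assoc', div_le_div_iff₀ (by positivity) two_pos]
          nlinarith [abs_nonneg φ']
  calc |(φ (f s) - φ (f t)) / (s - t) - φ' * L|
      ≤ |(φ (f s) - φ (f t)) / (s - t) - φ' * q| + |φ'| * |q - L| := by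
        rw [← abs_mul, mul_sub]
        exact abs_sub_le _ _ _
    _ < ε / (2 * M) * M + ε / 2 := add_lt_add_of_lt_of_le (hslope.trans_lt (by gcongr)) hlin
    _ = ε := by field_simp; ring

lemma ApproxDiffAE.inv {f : ℝ → ℝ} (hf : Measurable f) (haf : ApproxDiffAE f) :
    ApproxDiffAE fun t => (f t)⁻¹ := by
  have hzero := ae_densityOne (hf (measurableSet_singleton 0))
  rw [ApproxDiffAE, ae_restrict_iff' measurableSet_Icc] at haf ⊢
  filter_upwards [hzero, haf] with t hzt hft htI
  by_cases h0 : f t = 0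
  · refine ⟨0, hasApproxDerivAt_zero_of_densityOne ((hzt h0).mono ?_)⟩
    intro s (hs : f s = 0)
    simp [hs, h0]
  · obtain ⟨L, hL⟩ := hft htI
    exact ⟨_, (hasDerivAt_inv h0).comp_hasApproxDerivAt hL⟩

/-- The algebra `AD[0,1]` is von Neumann regular: for every `f ∈ AD[0,1]` there is
`g ∈ AD[0,1]` with `f·g·f = f`; explicitly one may take `g = 1/f` on `{f ≠ 0}` and `g = 0`
elsewhere, and this `g` is a.e. approximately differentiable. -/
theorem stmt_6 (f : ℝ → ℝ) (hf : Measurable f) (haf : ApproxDiffAE f) :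
    ∃ g : ℝ → ℝ, Measurable g ∧ ApproxDiffAE g ∧ (∀ t, f t * g t * f t = f t) ∧
      g = fun t => if f t ≠ 0 then (f t)⁻¹ else 0 := by
  refine ⟨fun t => (f t)⁻¹, hf.inv, haf.inv hf, fun t => mul_inv_mul_cancel (f t), ?_⟩
  funext t
  split_ifs with h
  · rfl
  · rw [not_not.mp h, inv_zero]
end

section
/- Let M be a semifinite von Neumann algebra with faithful normal trace τ and let A be a *-regular subalgebra of S(M) containing the unit. Then for every a ∈ A, the left support l(a) and the right support r(a) belong to A. -/
/-! For `x` in a `*`-regular ring `A`, pick a self-adjoint inner inverse `d` of `x x*`; then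
`p = x* d x` is a projection with `x p = x`, and properness of the involution is what makes
`x x* d x = x`. Since `p ∈ S x`, every `r` with `x r = x` satisfies `p r = p`, which together with
minimality forces the right support of `x` to equal `p ∈ A`. Left supports of `a` are right
supports of `a*`. -/

/-- `e` is the right support of `a` in a `*`-ring: the smallest self-adjoint idempotent
(projection) `e` with `a * e = a` (for `a = v|a|`, `r(a) = v*v`). -/
def IsRightSupport {S : Type*} [Ring S] [StarRing S] (a e : S) : Prop :=
  e * e = e ∧ star e = e ∧ a * e = a ∧
    ∀ q : S, q * q = q → star q = q → a * q = a → e * q = e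

/-- `f` is the left support of `a` in a `*`-ring: the smallest projection `f`
with `f * a = a` (for `a = v|a|`, `l(a) = v v*`). -/
def IsLeftSupport {S : Type*} [Ring S] [StarRing S] (a f : S) : Prop :=
  f * f = f ∧ star f = f ∧ f * a = a ∧
    ∀ q : S, q * q = q → star q = q → q * a = a → q * f = f

section SupportProjection

variable {S : Type*} [Ring S] [StarRing S]

theorem IsRightSupport.eq_of_isStarProjection {a e p z : S} (he : IsRightSupport a e)
    (hp : IsStarProjection p) (hap : a * p = a) (hpz : p = z * a) : e = p := by
  obtain ⟨-, hes, hae, hmin⟩ := he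
  have hep : e * p = e := hmin p hp.isIdempotentElem.eq hp.isSelfAdjoint.star_eq hap
  have hpe : p * e = p := by rw [hpz, mul_assoc, hae]
  calc e = star (e * p) := by rw [hep, hes]
    _ = p * e := by rw [star_mul, hp.isSelfAdjoint.star_eq, hes]
    _ = p := hpe

theorem IsLeftSupport.isRightSupport_star {a f : S} (hf : IsLeftSupport a f) :
    IsRightSupport (star a) f := by
  obtain ⟨hff, hfs, hfa, hmin⟩ := hf
  refine ⟨hff, hfs, by rw [← hfs, ← star_mul, hfa], fun q hqq hqs haq => ?_⟩
  have hqa : q * a = a := by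
    simpa only [star_mul, star_star, hqs] using congrArg star haq
  simpa only [star_mul, hqs, hfs] using congrArg star (hmin q hqq hqs hqa)

end SupportProjection

namespace Subring

variable {S : Type*} [Ring S] [StarRing S] {A : Subring S}

theorem exists_isSelfAdjoint_mul_mul_eq (hstar : ∀ x ∈ A, star x ∈ A)
    (hreg : ∀ x ∈ A, ∃ b ∈ A, x * b * x = x) {h : S} (hA : h ∈ A) (hh : IsSelfAdjoint h) :
    ∃ c ∈ A, IsSelfAdjoint c ∧ h * c * h = h := by
  obtain ⟨b, hbA, hb⟩ := hreg h hA
  refine ⟨b * h * star b, A.mul_mem (A.mul_mem hbA hA) (hstar b hbA), hh.conjugate b, ?_⟩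
  calc h * (b * h * star b) * h = (h * b * h) * star b * h := by simp only [mul_assoc]
    _ = h * star b * h := by rw [hb]
    _ = star (h * b * h) := by rw [star_mul, star_mul, hh.star_eq, mul_assoc]
    _ = h := by rw [hb, hh.star_eq]

theorem mul_eq_zero_of_mul_mul_star_self_eq_zero (hstar : ∀ x ∈ A, star x ∈ A)
    (hproper : ∀ c ∈ A, star c * c = 0 → c = 0) {x z : S} (hzx : z * x ∈ A)
    (h : z * (x * star x) = 0) : z * x = 0 := by
  refine star_eq_zero.mp (hproper _ (hstar _ hzx) ?_)
  rw [star_star, star_mul, ← mul_assoc, mul_assoc z, h, zero_mul]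

theorem exists_isStarProjection_mul_eq (hstar : ∀ x ∈ A, star x ∈ A)
    (hreg : ∀ x ∈ A, ∃ b ∈ A, x * b * x = x) (hproper : ∀ c ∈ A, star c * c = 0 → c = 0)
    {x : S} (hx : x ∈ A) :
    ∃ p ∈ A, IsStarProjection p ∧ x * p = x ∧ ∃ z, p = z * x := by
  obtain ⟨d, hdA, hd, hkdk⟩ := exists_isSelfAdjoint_mul_mul_eq hstar hreg
    (A.mul_mem hx (hstar x hx)) (IsSelfAdjoint.mul_star_self x)
  have hkdx : x * star x * d * x = x := by
    have hA : (x * star x * d - 1) * x ∈ A :=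
      A.mul_mem (A.sub_mem (A.mul_mem (A.mul_mem hx (hstar x hx)) hdA) A.one_mem) hx
    refine sub_eq_zero.mp ?_
    rw [← sub_one_mul, mul_eq_zero_of_mul_mul_star_self_eq_zero hstar hproper hA]
    rw [sub_mul, hkdk, one_mul, sub_self]
  refine ⟨star x * d * x, A.mul_mem (A.mul_mem (hstar x hx) hdA) hx, ⟨?_, hd.conjugate' x⟩,
    by simpa only [mul_assoc] using hkdx, star x * d, rfl⟩
  change star x * d * x * (star x * d * x) = star x * d * x
  calc star x * d * x * (star x * d * x) = star x * d * (x * star x * d * x) := by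
        simp only [mul_assoc]
    _ = star x * d * x := by rw [hkdx]

theorem isRightSupport_mem (hstar : ∀ x ∈ A, star x ∈ A)
    (hreg : ∀ x ∈ A, ∃ b ∈ A, x * b * x = x) (hproper : ∀ c ∈ A, star c * c = 0 → c = 0)
    {a e : S} (ha : a ∈ A) (he : IsRightSupport a e) : e ∈ A := by
  obtain ⟨p, hpA, hp, hap, z, hpz⟩ := exists_isStarProjection_mul_eq hstar hreg hproper ha
  rwa [he.eq_of_isStarProjection hp hap hpz]

end Subring

/-- Let `S` be a `*`-ring (playing the role of `S(M)`, the measurable operators affiliated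
with a semifinite von Neumann algebra) and `A ⊆ S` a unital `*`-regular subalgebra:
`A` is star-closed, von Neumann regular, and the involution is proper on `A`.
Then for every `a ∈ A`, the left support `l(a)` and the right support `r(a)`
(taken in `S`) belong to `A`. -/
theorem stmt_10 {S : Type*} [Ring S] [StarRing S] (A : Subring S)
    (hstar : ∀ x ∈ A, star x ∈ A)
    (hreg : ∀ x ∈ A, ∃ b ∈ A, x * b * x = x)
    (hproper : ∀ c ∈ A, star c * c = 0 → c = 0)
    (a e f : S) (ha : a ∈ A)
    (he : IsRightSupport a e) (hf : IsLeftSupport a f) :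
    e ∈ A ∧ f ∈ A :=
  ⟨Subring.isRightSupport_mem hstar hreg hproper ha he,
    Subring.isRightSupport_mem hstar hreg hproper (hstar a ha) hf.isRightSupport_star⟩
end

section
/- Let M be a finite von Neumann algebra with faithful normal finite trace τ. The function ρ(x,y) = τ(r(x−y)) on S(M), where r(z) denotes the right support projection of z, is a metric (the rank metric), and any derivation δ from a unital *-regular subalgebra A of S(M) into S(M) is Lipschitz with constant 3 with respect to ρ: ρ(δ(a), δ(b)) ≤ 3 ρ(a,b) for all a, b ∈ A. -/
/-- Let `S` be a ring (playing the role of the algebra `S(M)` of measurable operators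
affiliated with a finite von Neumann algebra with faithful normal finite trace `τ`) and
let `rk : S → ℝ` be the rank function `rk x = τ(r(x))` (`r(x)` the right support of `x`);
its characteristic properties are listed as hypotheses.  Then `ρ(x,y) = rk (x - y)` is a
metric (the rank metric), and every derivation `δ` from a unital `*`-regular subalgebra
`A ⊆ S` into `S` satisfies `ρ(δ(a), δ(b)) ≤ 3 ρ(a, b)`. -/
theorem stmt_11 {S : Type*} [Ring S] (A : Subring S) (rk : S → ℝ)
    (hrk0 : ∀ x : S, rk x = 0 ↔ x = 0)
    (hrknn : ∀ x : S, 0 ≤ rk x)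
    (hrkneg : ∀ x : S, rk (-x) = rk x)
    (hrkadd : ∀ x y : S, rk (x + y) ≤ rk x + rk y)
    (hrkmulL : ∀ x y : S, rk (x * y) ≤ rk x)
    (hrkmulR : ∀ x y : S, rk (x * y) ≤ rk y)
    -- every `x ∈ A` has its left support `f = l(x)` and right support `e = r(x)` in `A`,
    -- with `τ(l(x)) = τ(r(x)) = rk x`:
    (hsupp : ∀ x ∈ A, ∃ e ∈ A, ∃ f ∈ A,
      f * x = x ∧ x * e = x ∧ rk e = rk x ∧ rk f = rk x)
    (δ : A → S)
    (hadd : ∀ x y : A, δ (x + y) = δ x + δ y)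
    (hleib : ∀ x y : A, δ (x * y) = δ x * (y : S) + (x : S) * δ y) :
    ((∀ x y : S, rk (x - y) = 0 ↔ x = y) ∧
     (∀ x y : S, rk (x - y) = rk (y - x)) ∧
     (∀ x y z : S, rk (x - z) ≤ rk (x - y) + rk (y - z))) ∧
    (∀ a b : A, rk (δ a - δ b) ≤ 3 * rk ((a : S) - (b : S))) := by
  refine ⟨⟨fun x y => by rw [hrk0, sub_eq_zero],
    fun x y => by rw [← hrkneg (x - y), neg_sub],
    fun x y z => by
      have := hrkadd (x - y) (y - z)
      simpa using this⟩, ?_⟩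
  intro a b
  set c : A := a - b with hc
  have hδsub : δ a - δ b = δ c := by
    have : δ (c + b) = δ c + δ b := hadd c b
    rw [hc] at this
    simp only [sub_add_cancel] at this
    rw [this]; abel
  have hcoe : ((c : S)) = (a : S) - (b : S) := rfl
  rw [hδsub, ← hcoe]
  obtain ⟨e, he, f, hf, hfx, hxe, hrke, hrkf⟩ := hsupp (c : S) c.2
  set eA : A := ⟨e, he⟩
  set fA : A := ⟨f, hf⟩
  have h1 : fA * c = c := Subtype.ext hfx
  have h2 : c * eA = c := Subtype.ext hxe
  have e1 : δ c = δ fA * (c : S) + f * δ c := by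
    conv_lhs => rw [← h1]
    exact hleib fA c
  have e2 : δ c = δ c * e + (c : S) * δ eA := by
    conv_lhs => rw [← h2]
    exact hleib c eA
  have key : δ c = δ fA * (c : S) + (f * (δ c * e) + f * ((c : S) * δ eA)) := by
    calc δ c = δ fA * (c : S) + f * δ c := e1
    _ = δ fA * (c : S) + f * (δ c * e + (c : S) * δ eA) := by rw [← e2]
    _ = δ fA * (c : S) + (f * (δ c * e) + f * ((c : S) * δ eA)) := by rw [mul_add]
  calc rk (δ c) ≤ rk (δ fA * (c : S)) + rk (f * (δ c * e) + f * ((c : S) * δ eA)) := by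
        rw [congrArg rk key]; exact hrkadd _ _
    _ ≤ rk (δ fA * (c : S)) + (rk (f * (δ c * e)) + rk (f * ((c : S) * δ eA))) := by
        have := hrkadd (f * (δ c * e)) (f * ((c : S) * δ eA)); linarith
    _ ≤ rk (c : S) + (rk e + rk f) := by
        have h3 := hrkmulR (δ fA) (c : S)
        have h4 := le_trans (hrkmulR f (δ c * e)) (hrkmulR (δ c) e)
        have h5 := hrkmulL f ((c : S) * δ eA)
        linarith
    _ = 3 * rk (c : S) := by rw [hrke, hrkf]; ring
end

section
/- Let δ : S[0,1] → S[0,1] be a derivation on the algebra of measurable functions on [0,1] that is continuous with respect to the topology of convergence in measure. Then δ = 0. -/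
open MeasureTheory Set Filter

/-- Lebesgue measure on `[0,1]`. -/
noncomputable def μ01 : Measure ℝ := volume.restrict (Icc (0:ℝ) 1)

/-!
A derivation kills every idempotent `e`, since `δ e = 2 e δ e` and `(1 - 2e)² = 1`. The binary
expansion `⌊2ⁿ g⌋ / 2ⁿ` of a `[0, 1)`-valued `g` is a finite sum of multiples of idempotents
(its binary digits) and converges to `g` uniformly, hence in measure; by continuity `δ g = 0`,
and by linearity `δ` vanishes on all bounded functions. An arbitrary `f` factors as
`f = g · (1 + t f²)` with `g` bounded, and the Leibniz rule then forces `δ f · (1 - t f²) = 0`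
for `t = 1, 2`, so `δ f = 0`.
-/

theorem TendstoUniformly.tendstoInMeasure {α ι E : Type*} [MeasurableSpace α] {μ : Measure α}
    [PseudoMetricSpace E] {l : Filter ι} {F : ι → α → E} {f : α → E}
    (h : TendstoUniformly F f l) : TendstoInMeasure μ F l f := by
  rw [tendstoInMeasure_iff_dist]
  intro ε hε
  refine tendsto_const_nhds.congr' ?_
  filter_upwards [Metric.tendstoUniformly_iff.1 h ε hε] with n hn
  have hempty : {x | ε ≤ dist (F n x) (f x)} = ∅ :=
    eq_empty_of_forall_notMem fun x hx => hx.not_gt (dist_comm (f x) (F n x) ▸ hn x)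
  rw [hempty, measure_empty]

theorem Int.floor_two_mul_sub_two_mul_floor (y : ℝ) :
    ⌊2 * y⌋ - 2 * ⌊y⌋ = 0 ∨ ⌊2 * y⌋ - 2 * ⌊y⌋ = 1 := by
  have hlow : 2 * ⌊y⌋ ≤ ⌊2 * y⌋ := Int.le_floor.2 <| by push_cast; linarith [Int.floor_le y]
  have hup : ⌊2 * y⌋ < 2 * ⌊y⌋ + 2 :=
    Int.floor_lt.2 <| by push_cast; linarith [Int.lt_floor_add_one y]
  omega

noncomputable def dyadicFloor (n : ℕ) (x : ℝ) : ℝ := ⌊2 ^ n * x⌋ / 2 ^ n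

noncomputable def binaryDigit (n : ℕ) (x : ℝ) : ℝ := ⌊2 ^ (n + 1) * x⌋ - 2 * ⌊2 ^ n * x⌋

theorem binaryDigit_eq_zero_or_eq_one (n : ℕ) (x : ℝ) :
    binaryDigit n x = 0 ∨ binaryDigit n x = 1 := by
  have h := Int.floor_two_mul_sub_two_mul_floor (2 ^ n * x)
  rw [← mul_assoc, ← pow_succ'] at h
  unfold binaryDigit
  exact_mod_cast h

theorem dyadicFloor_zero_of_mem_Ico {x : ℝ} (hx : x ∈ Ico 0 1) : dyadicFloor 0 x = 0 := by
  simp [dyadicFloor, Int.floor_eq_zero_iff.2 hx]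

theorem dyadicFloor_succ (n : ℕ) (x : ℝ) :
    dyadicFloor (n + 1) x = dyadicFloor n x + (2 ^ (n + 1))⁻¹ * binaryDigit n x := by
  simp only [dyadicFloor, binaryDigit]
  field_simp
  ring

theorem abs_sub_dyadicFloor_lt (n : ℕ) (x : ℝ) : |x - dyadicFloor n x| < (2 ^ n)⁻¹ := by
  have h2n : (0 : ℝ) < 2 ^ n := by positivity
  have hfloor : x - dyadicFloor n x = (2 ^ n * x - ⌊2 ^ n * x⌋) / 2 ^ n := by
    simp only [dyadicFloor]; field_simp
  rw [hfloor, abs_div, abs_of_pos h2n, div_lt_iff₀ h2n, inv_mul_cancel₀ h2n.ne', abs_lt]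
  constructor <;> linarith [Int.floor_le (2 ^ n * x), Int.lt_floor_add_one (2 ^ n * x)]

theorem tendstoUniformly_dyadicFloor {α : Type*} (g : α → ℝ) :
    TendstoUniformly (fun n a => dyadicFloor n (g a)) g atTop := by
  rw [Metric.tendstoUniformly_iff]
  intro ε hε
  have hpow : Tendsto (fun n : ℕ => ((2 : ℝ) ^ n)⁻¹) atTop (nhds 0) := by
    simpa [inv_pow] using
      tendsto_pow_atTop_nhds_zero_of_lt_one (r := (2 : ℝ)⁻¹) (by norm_num) (by norm_num)
  filter_upwards [(tendsto_order.1 hpow).2 ε hε] with n hn a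
  exact (abs_sub_dyadicFloor_lt n (g a)).trans hn

structure IsAEDerivation {α : Type*} [MeasurableSpace α] (μ : Measure α)
    (δ : (α → ℝ) → α → ℝ) : Prop where
  map_add : ∀ f g, δ (f + g) =ᵐ[μ] δ f + δ g
  map_smul : ∀ (c : ℝ) f, δ (c • f) =ᵐ[μ] c • δ f
  leibniz : ∀ f g, δ (f * g) =ᵐ[μ] δ f * g + f * δ g

def SeqContinuousInMeasure {α : Type*} [MeasurableSpace α] (μ : Measure α)
    (δ : (α → ℝ) → α → ℝ) : Prop :=
  ∀ (F : ℕ → α → ℝ) (f : α → ℝ),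
    TendstoInMeasure μ F atTop f → TendstoInMeasure μ (fun n => δ (F n)) atTop (δ f)

section

variable {α : Type*} [MeasurableSpace α] {μ : Measure α} {δ : (α → ℝ) → α → ℝ}

theorem SeqContinuousInMeasure.ae_eq_zero_of_tendstoInMeasure
    (hcont : SeqContinuousInMeasure μ δ)
    {F : ℕ → α → ℝ} {f : α → ℝ} (hF : TendstoInMeasure μ F atTop f)
    (hker : ∀ n, δ (F n) =ᵐ[μ] 0) : δ f =ᵐ[μ] 0 := by
  have hzero : TendstoInMeasure μ (fun n => δ (F n)) atTop 0 :=
    (tendsto_const_nhds (x := (0 : ℝ))).tendstoUniformly_const.tendstoInMeasure.congr_left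
      fun n => (hker n).symm
  exact tendstoInMeasure_ae_unique (hcont F f hF) hzero

namespace IsAEDerivation

theorem map_zero (hδ : IsAEDerivation μ δ) : δ 0 =ᵐ[μ] 0 := by
  simpa using hδ.map_smul 0 0

theorem ae_eq_zero_add (hδ : IsAEDerivation μ δ) {f g : α → ℝ} (hf : δ f =ᵐ[μ] 0)
    (hg : δ g =ᵐ[μ] 0) : δ (f + g) =ᵐ[μ] 0 :=
  (hδ.map_add f g).trans (by simpa using hf.add hg)

theorem ae_eq_zero_smul (hδ : IsAEDerivation μ δ) (c : ℝ) {f : α → ℝ} (hf : δ f =ᵐ[μ] 0) :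
    δ (c • f) =ᵐ[μ] 0 :=
  (hδ.map_smul c f).trans (by simpa using hf.const_smul c)

theorem ae_eq_zero_of_isIdempotentElem (hδ : IsAEDerivation μ δ) {e : α → ℝ}
    (he : IsIdempotentElem e) : δ e =ᵐ[μ] 0 := by
  have hleib := hδ.leibniz e e
  rw [he.eq] at hleib
  filter_upwards [hleib] with a ha
  have hea : e a * e a = e a := congrFun he.eq a
  simp only [Pi.add_apply, Pi.mul_apply, Pi.zero_apply] at ha ⊢
  -- `δ e = 2 e δ e` and `(1 - 2 e) ^ 2 = 1`
  linear_combination (1 - 2 * e a) * ha - 4 * δ e a * hea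

theorem ae_eq_zero_of_mem_Ico (hδ : IsAEDerivation μ δ) (hcont : SeqContinuousInMeasure μ δ)
    {g : α → ℝ} (hg : ∀ a, g a ∈ Ico 0 1) : δ g =ᵐ[μ] 0 := by
  refine hcont.ae_eq_zero_of_tendstoInMeasure
    (tendstoUniformly_dyadicFloor g).tendstoInMeasure fun n => ?_
  induction n with
  | zero =>
    have hfloor : (fun a => dyadicFloor 0 (g a)) = 0 :=
      funext fun a => dyadicFloor_zero_of_mem_Ico (hg a)
    simpa [hfloor] using hδ.map_zero
  | succ n ih =>
    have hdigit : IsIdempotentElem fun a => binaryDigit n (g a) := by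
      funext a
      rcases binaryDigit_eq_zero_or_eq_one n (g a) with h | h <;> simp [h]
    have hsucc : (fun a => dyadicFloor (n + 1) (g a))
        = (fun a => dyadicFloor n (g a)) + ((2 : ℝ) ^ (n + 1))⁻¹ • fun a => binaryDigit n (g a) :=
      funext fun a => dyadicFloor_succ n (g a)
    rw [hsucc]
    exact hδ.ae_eq_zero_add ih (hδ.ae_eq_zero_smul _ (hδ.ae_eq_zero_of_isIdempotentElem hdigit))

theorem ae_eq_zero_of_abs_le_one (hδ : IsAEDerivation μ δ) (hcont : SeqContinuousInMeasure μ δ)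
    {g : α → ℝ} (hg : ∀ a, |g a| ≤ 1) : δ g =ᵐ[μ] 0 := by
  set g' : α → ℝ := fun a => (g a + 2) / 4
  have hg' : ∀ a, g' a ∈ Ico 0 1 := fun a => by
    obtain ⟨hlow, hup⟩ := abs_le.1 (hg a)
    constructor <;> simp only [g'] <;> linarith
  have hrepr : g = (4 : ℝ) • g' + (-2 : ℝ) • 1 := by
    funext a
    simp only [g', Pi.add_apply, Pi.smul_apply, Pi.one_apply, smul_eq_mul]
    ring
  rw [hrepr]
  exact hδ.ae_eq_zero_add (hδ.ae_eq_zero_smul _ (hδ.ae_eq_zero_of_mem_Ico hcont hg'))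
    (hδ.ae_eq_zero_smul _ (hδ.ae_eq_zero_of_isIdempotentElem .one))

theorem map_one_add_smul_mul_self (hδ : IsAEDerivation μ δ) (t : ℝ) (f : α → ℝ) :
    δ (1 + t • (f * f)) =ᵐ[μ] (2 * t) • (f * δ f) := by
  filter_upwards [hδ.map_add 1 (t • (f * f)), hδ.ae_eq_zero_of_isIdempotentElem .one,
    hδ.map_smul t (f * f), hδ.leibniz f f] with a hsum hone hsmul hsq
  simp only [Pi.add_apply, Pi.smul_apply, Pi.mul_apply, Pi.zero_apply,
    smul_eq_mul] at hsum hone hsmul hsq ⊢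
  rw [hsum, hone, hsmul, hsq]
  ring

theorem ae_mul_one_sub_mul_sq_eq_zero (hδ : IsAEDerivation μ δ)
    (hcont : SeqContinuousInMeasure μ δ) {t : ℝ} (ht : 1 ≤ t) (f : α → ℝ) :
    ∀ᵐ a ∂μ, δ f a * (1 - t * f a ^ 2) = 0 := by
  set h : α → ℝ := 1 + t • (f * f)
  have hpos : ∀ a, 0 < h a := fun a => by
    simp only [h, Pi.add_apply, Pi.one_apply, Pi.smul_apply, Pi.mul_apply, smul_eq_mul]
    nlinarith [mul_self_nonneg (f a)]
  have hbdd : ∀ a, |(f / h) a| ≤ 1 := fun a => by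
    rw [Pi.div_apply, abs_div, abs_of_pos (hpos a), div_le_one (hpos a)]
    simp only [h, Pi.add_apply, Pi.one_apply, Pi.smul_apply, Pi.mul_apply, smul_eq_mul]
    nlinarith [sq_nonneg (|f a| - 1), abs_mul_abs_self (f a), abs_nonneg (f a)]
  have hfactor : f = f / h * h := funext fun a => (div_mul_cancel₀ _ (hpos a).ne').symm
  have hleib := hδ.leibniz (f / h) h
  rw [← hfactor] at hleib
  filter_upwards [hleib, hδ.ae_eq_zero_of_abs_le_one hcont hbdd,
    hδ.map_one_add_smul_mul_self t f] with a hfa hga hha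
  simp only [Pi.add_apply, Pi.mul_apply, Pi.div_apply, Pi.zero_apply, Pi.smul_apply,
    smul_eq_mul] at hfa hga hha
  rw [hga, hha] at hfa
  have hne := (hpos a).ne'
  simp only [h, Pi.add_apply, Pi.one_apply, Pi.smul_apply, Pi.mul_apply, smul_eq_mul] at hfa hne
  field_simp at hfa
  linear_combination hfa

theorem ae_eq_zero (hδ : IsAEDerivation μ δ) (hcont : SeqContinuousInMeasure μ δ) (f : α → ℝ) :
    δ f =ᵐ[μ] 0 := by
  filter_upwards [hδ.ae_mul_one_sub_mul_sq_eq_zero hcont le_rfl f,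
    hδ.ae_mul_one_sub_mul_sq_eq_zero hcont one_le_two f] with a h₁ h₂
  rw [Pi.zero_apply]
  linear_combination 2 * h₁ - h₂

end IsAEDerivation

end

theorem stmt_15_general (δ : (ℝ → ℝ) → (ℝ → ℝ))
    (hadd : ∀ f g : ℝ → ℝ, δ (f + g) =ᵐ[μ01] δ f + δ g)
    (hsmul : ∀ (c : ℝ) (f : ℝ → ℝ), δ (c • f) =ᵐ[μ01] c • δ f)
    (hleib : ∀ f g : ℝ → ℝ, δ (f * g) =ᵐ[μ01] δ f * g + f * δ g)
    (hcont : ∀ (F : ℕ → ℝ → ℝ) (f : ℝ → ℝ),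
      TendstoInMeasure μ01 F atTop f →
      TendstoInMeasure μ01 (fun n => δ (F n)) atTop (δ f)) :
    ∀ f : ℝ → ℝ, δ f =ᵐ[μ01] 0 :=
  IsAEDerivation.ae_eq_zero ⟨hadd, hsmul, hleib⟩ hcont

/-- A derivation on `S[0,1]` (encoded on representatives: `δ` respects a.e. equality and
satisfies linearity and the Leibniz rule a.e.) which is continuous with respect to the
topology of convergence in measure is identically zero. -/
theorem stmt_15 (δ : (ℝ → ℝ) → (ℝ → ℝ))
    (hwd : ∀ f g : ℝ → ℝ, f =ᵐ[μ01] g → δ f =ᵐ[μ01] δ g)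
    (hadd : ∀ f g : ℝ → ℝ, δ (f + g) =ᵐ[μ01] δ f + δ g)
    (hsmul : ∀ (c : ℝ) (f : ℝ → ℝ), δ (c • f) =ᵐ[μ01] c • δ f)
    (hleib : ∀ f g : ℝ → ℝ, δ (f * g) =ᵐ[μ01] δ f * g + f * δ g)
    (hcont : ∀ (F : ℕ → ℝ → ℝ) (f : ℝ → ℝ),
      TendstoInMeasure μ01 F atTop f →
      TendstoInMeasure μ01 (fun n => δ (F n)) atTop (δ f)) :
    ∀ f : ℝ → ℝ, δ f =ᵐ[μ01] 0 :=
  stmt_15_general δ hadd hsmul hleib hcont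
end
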